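/- Let G be a finite pregeometry and Σ a collection of closed subsets of G that is downward closed (if Y is closed and Y ⊆ X ∈ Σ then Y ∈ Σ). Then Δ_G(Σ) − d(G) = Σ_{X closed in G, X ∉ Σ} α_G(X) − |G ∖ ∪Σ|. -/

import Mathlib

/-!
For a closed set `X`, the recursion defining `α` says `d(X) = |X| - Σ_{Y ⊆ X closed} α(Y)`.
Intersections of members of `Σ` are closed, so substituting this into `Δ_G(Σ)` and applying
inclusion–exclusion to both terms gives `Δ_G(Σ) = |⋃Σ| - Σ_{Y closed, Y ⊆ E for some E ∈ Σ} α(Y)`,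
and by downward closure the last sum runs exactly over `Σ`. The same identity for `X = G` splits
`|G| - d(G)` into the `α`-sums over `Σ` and over the closed sets outside `Σ`.
-/

open scoped Classical

/-- A combinatorial pregeometry (matroid) on the ground type `α`, given by a
dimension (rank) function on finite subsets. -/
structure Pregeometry (α : Type*) [DecidableEq α] where
  dim : Finset α → ℕ
  dim_empty : dim ∅ = 0
  dim_le_insert : ∀ (A : Finset α) (x : α), dim A ≤ dim (insert x A)
  insert_le_dim : ∀ (A : Finset α) (x : α), dim (insert x A) ≤ dim A + 1
  submodular : ∀ A B : Finset α, dim (A ∪ B) + dim (A ∩ B) ≤ dim A + dim B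

namespace Pregeometry

variable {α : Type*} [DecidableEq α] (G : Pregeometry α)

/-- Closure of an arbitrary subset. -/
def cl (Y : Set α) : Set α :=
  {x | ∃ A : Finset α, ↑A ⊆ Y ∧ G.dim (insert x A) = G.dim A}

/-- `Y` is closed (in the ambient pregeometry `G`). -/
def IsClosed (Y : Set α) : Prop := G.cl Y = Y

/-- `X` is a closed set of the subpregeometry of `G` induced on `P`
(whose closure operator is `Y ↦ cl Y ∩ P`). -/
def IsClosedIn (P X : Set α) : Prop := X ⊆ P ∧ G.cl X ∩ P = X

/-- Dimension of an arbitrary subset, with value `⊤` when infinite-dimensional. -/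
noncomputable def edim (Y : Set α) : ℕ∞ :=
  ⨆ (A : Finset α) (_ : ↑A ⊆ Y), (G.dim A : ℕ∞)

/-- The (natural number) dimension of a finite-dimensional subset. -/
noncomputable def sdim (Y : Set α) : ℕ := (G.edim Y).toNat

/-- The alternating inclusion–exclusion sum
`Δ_G(Σ) = Σ_{∅ ≠ S ⊆ Σ} (-1)^{|S|+1} d(⋂ S)` of a finite collection of sets. -/
noncomputable def flatSum (Sig : Finset (Set α)) : ℤ :=
  ∑ S ∈ Sig.powerset.filter (· ≠ ∅),
    (-1) ^ (S.card + 1) * (G.sdim (⋂₀ ↑S) : ℤ)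

/-- `P ⊑* Q`: for the subpregeometries induced on `P ⊆ Q`, the dimension of the
intersection of two closed sets of `P` equals the dimension of the intersection
of their closures in `Q` (the closure of `X` in `Q` being `cl X ∩ Q`). -/
def SqStar (P Q : Set α) : Prop := P ⊆ Q ∧
  ∀ X₁ X₂ : Set α, G.IsClosedIn P X₁ → G.IsClosedIn P X₂ →
    G.edim (X₁ ∩ X₂) = G.edim (G.cl X₁ ∩ G.cl X₂ ∩ Q)

/-- `P ⊑ Q`: `P` is strongly embedded in `Q`: for every finite collection `Σ` of
finite-dimensional closed sets of `Q`, `Δ_P(Σ_P) ≤ Δ_Q(Σ)` where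
`Σ_P = {E ∩ P : E ∈ Σ}`. -/
def Sq (P Q : Set α) : Prop := P ⊆ Q ∧
  ∀ Sig : Finset (Set α), (∀ E ∈ Sig, G.IsClosedIn Q E) →
    (∀ E ∈ Sig, G.edim E ≠ ⊤) →
    G.flatSum (Sig.image (· ∩ P)) ≤ G.flatSum Sig

/-- The subpregeometry induced on `P` is flat: every finite collection of
finite-dimensional closed sets satisfies `d(⋃ Σ) ≤ Δ(Σ)`. -/
def FlatIn (P : Set α) : Prop :=
  ∀ Sig : Finset (Set α), (∀ E ∈ Sig, G.IsClosedIn P E) →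
    (∀ E ∈ Sig, G.edim E ≠ ⊤) →
    (G.sdim (⋃₀ ↑Sig) : ℤ) ≤ G.flatSum Sig

/-- The α-function of the subpregeometry of `G` induced on `P`:
`α(X) = |X| − d(X) − Σ_{Y ⊊ X closed} α(Y)`. -/
noncomputable def alphaIn (P : Set α) (X : Finset α) : ℤ :=
  (X.card : ℤ) - (G.dim X : ℤ) -
    ∑ Y ∈ (X.powerset.filter fun Y => Y ≠ X ∧ G.IsClosedIn P ↑Y).attach,
      alphaIn P Y.1
termination_by X.card
decreasing_by
  have h := Y.2
  simp only [Finset.mem_filter, Finset.mem_powerset] at h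
  exact Finset.card_lt_card (lt_of_le_of_ne h.1 h.2.1)

end Pregeometry

/-- A hypergraph on the vertex type `α`: a set of nonempty finite edges. -/
structure PHypergraph (α : Type*) where
  edges : Set (Finset α)
  nonempty_edges : ∀ e ∈ edges, e ≠ ∅

namespace PHypergraph

variable {α : Type*} [DecidableEq α] (A : PHypergraph α)

/-- The set of edges contained in a set of vertices. -/
def edgesIn (P : Set α) : Set (Finset α) := {e | e ∈ A.edges ∧ ↑e ⊆ P}

/-- The predimension `δ(P) = |P| − |R[P]|` of a finite set of vertices. -/
noncomputable def delta (P : Finset α) : ℤ :=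
  (P.card : ℤ) - (A.edgesIn ↑P).ncard

/-- The relative predimension `δ(L/P) = |L∖P| − |R[L∪P]∖R[P]|`. -/
noncomputable def deltaRel (L : Finset α) (P : Set α) : ℤ :=
  ((↑L \ P : Set α).ncard : ℤ) -
    ({e | e ∈ A.edges ∧ ↑e ⊆ ↑L ∪ P ∧ ¬ ↑e ⊆ P} : Set (Finset α)).ncard

/-- `P` is self-sufficient in `A`: `δ(X/P) ≥ 0` for every finite `X`, stated so
as to be meaningful even when infinitely many edges are involved. -/
def SelfSuff (P : Set α) : Prop :=
  ∀ X : Finset α, ∀ Es : Finset (Finset α),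
    (∀ e ∈ Es, e ∈ A.edges ∧ ↑e ⊆ ↑X ∪ P ∧ ¬ ↑e ⊆ P) →
    (Es.card : ℤ) ≤ ((↑X \ P : Set α).ncard : ℤ)

/-- The dimension function associated to a hypergraph:
`d(X) = inf {δ(B) : X ⊆ B finite}`. -/
noncomputable def hdim (X : Finset α) : ℤ :=
  sInf {d : ℤ | ∃ B : Finset α, X ⊆ B ∧ d = A.delta B}

/-- The induced subhypergraph on a set `P` of vertices (keeping `α` as the
ambient vertex type). -/
def restrict (P : Set α) : PHypergraph α :=
  ⟨{e | e ∈ A.edges ∧ ↑e ⊆ P}, fun e he => A.nonempty_edges e he.1⟩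

/-- A pregeometry `G` is represented by the hypergraph `A` if the associated
dimension function of `A` is the dimension function of `G`. -/
def Represents (G : Pregeometry α) : Prop :=
  ∀ X : Finset α, (G.dim X : ℤ) = A.hdim X

end PHypergraph

open Finset

theorem Finset.inclusion_exclusion_sum_filter_exists {ι β : Type*} [DecidableEq ι] (s : Finset ι)
    (F : Finset β) (p : ι → β → Prop) [DecidablePred fun b => ∃ i ∈ s, p i b]
    [∀ t : Finset ι, DecidablePred fun b => ∀ i ∈ t, p i b] (f : β → ℤ) :
    ∑ b ∈ F.filter (fun b => ∃ i ∈ s, p i b), f b =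
      ∑ t ∈ s.powerset.filter (· ≠ ∅),
        (-1) ^ (#t + 1) * ∑ b ∈ F.filter (fun b => ∀ i ∈ t, p i b), f b := by
  have hunion : s.biUnion (fun i => F.filter (p i)) = F.filter (fun b => ∃ i ∈ s, p i b) := by
    ext b
    simp only [mem_biUnion, mem_filter]
    tauto
  have hinter (t : Finset ι) (ht : t.Nonempty) :
      t.inf' ht (fun i => F.filter (p i)) = F.filter (fun b => ∀ i ∈ t, p i b) := by
    ext b
    simp only [mem_inf', mem_filter]
    exact ⟨fun h => ⟨(h _ ht.choose_spec).1, fun i hi => (h i hi).2⟩,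
      fun h i hi => ⟨h.1, h.2 i hi⟩⟩
  rw [← hunion, inclusion_exclusion_sum_biUnion]
  simp only [hinter, smul_eq_mul]
  rw [filter_congr fun t _ => (nonempty_iff_ne_empty (s := t)).symm]
  -- the two sides differ only in decidability instances
  convert sum_coe_sort (M := ℤ) _ _ using 1
  congr!

namespace Pregeometry

variable {α : Type*} [DecidableEq α] (G : Pregeometry α)

lemma dim_le_dim_union (A C : Finset α) : G.dim A ≤ G.dim (A ∪ C) := by
  induction C using Finset.induction_on with
  | empty => rw [union_empty]
  | insert x C _ ih => exact union_insert x A C ▸ ih.trans (G.dim_le_insert _ x)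

lemma dim_mono {A B : Finset α} (h : A ⊆ B) : G.dim A ≤ G.dim B :=
  union_eq_right.mpr h ▸ G.dim_le_dim_union A B

lemma edim_coe (X : Finset α) : G.edim ↑X = G.dim X :=
  le_antisymm (iSup₂_le fun _ hA => by exact_mod_cast G.dim_mono (coe_subset.mp hA))
    (le_iSup₂_of_le X subset_rfl le_rfl)

lemma sdim_coe (X : Finset α) : G.sdim ↑X = G.dim X := by
  rw [sdim, edim_coe, ENat.toNat_natCast]

lemma subset_cl (Y : Set α) : Y ⊆ G.cl Y :=
  fun x hx => ⟨{x}, by simpa using hx, by rw [insert_eq_of_mem (mem_singleton_self x)]⟩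

lemma cl_mono {Y Z : Set α} (h : Y ⊆ Z) : G.cl Y ⊆ G.cl Z :=
  fun _ ⟨A, hA, hd⟩ => ⟨A, hA.trans h, hd⟩

lemma isClosed_univ : G.IsClosed Set.univ :=
  (Set.subset_univ _).antisymm (G.subset_cl _)

lemma isClosed_sInter {S : Set (Set α)} (h : ∀ E ∈ S, G.IsClosed E) : G.IsClosed (⋂₀ S) :=
  (Set.subset_sInter fun E hE => h E hE ▸ G.cl_mono (Set.sInter_subset_of_mem hE)).antisymm
    (G.subset_cl _)

lemma isClosedIn_univ_iff {Y : Set α} : G.IsClosedIn Set.univ Y ↔ G.IsClosed Y := by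
  simp [IsClosedIn, IsClosed]

lemma alphaIn_add_sum_ssubset (P : Set α) (X : Finset α) :
    G.alphaIn P X + ∑ Y ∈ X.powerset.filter (fun Y => Y ≠ X ∧ G.IsClosedIn P ↑Y), G.alphaIn P Y
      = #X - G.dim X := by
  rw [alphaIn, sum_attach]
  ring

lemma sum_alphaIn_closed_subsets {P : Set α} {X : Finset α} (hX : G.IsClosedIn P X) :
    ∑ Y ∈ X.powerset.filter (fun Y : Finset α => G.IsClosedIn P ↑Y), G.alphaIn P Y =
      #X - G.dim X := by
  rw [← G.alphaIn_add_sum_ssubset, ← add_sum_erase _ _ (mem_filter.mpr ⟨mem_powerset_self X, hX⟩)]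
  congr 2
  ext Y
  simp only [mem_erase, mem_filter]
  tauto

variable [Fintype α]

lemma coe_inf_id (t : Finset (Finset α)) :
    (↑(t.inf id) : Set α) = ⋂₀ ↑(t.image ((↑) : Finset α → Set α)) := by
  ext a
  simp [mem_inf]

lemma flatSum_image_coe (Sig : Finset (Finset α)) :
    G.flatSum (Sig.image ((↑) : Finset α → Set α)) =
      ∑ t ∈ Sig.powerset.filter (· ≠ ∅), (-1) ^ (#t + 1) * (G.dim (t.inf id) : ℤ) := by
  rw [flatSum, powerset_image, filter_image, sum_image (image_injective coe_injective).injOn]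
  refine sum_congr (filter_congr fun t _ => by simp) fun t _ => ?_
  rw [card_image_of_injective _ coe_injective, ← coe_inf_id, sdim_coe]

variable {Sig : Finset (Finset α)}

lemma dim_inf_eq_sum_sub_sum_alphaIn (hcl : ∀ E ∈ Sig, G.IsClosed ↑E)
    (hdc : ∀ E ∈ Sig, ∀ Y : Finset α, G.IsClosed ↑Y → Y ⊆ E → Y ∈ Sig)
    {t : Finset (Finset α)} (htSig : t ⊆ Sig) (ht : t.Nonempty) :
    (G.dim (t.inf id) : ℤ) = ∑ _ ∈ univ.filter (fun a => ∀ E ∈ t, a ∈ E), 1 -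
      ∑ Y ∈ Sig.filter (fun Y => ∀ E ∈ t, Y ⊆ E), G.alphaIn Set.univ Y := by
  have hclosed : G.IsClosed ↑(t.inf id) := by
    rw [coe_inf_id]
    refine G.isClosed_sInter fun _ hE => ?_
    obtain ⟨E, hEt, rfl⟩ := by simpa using hE
    exact hcl E (htSig hEt)
  have hinf : univ.filter (fun a => ∀ E ∈ t, a ∈ E) = t.inf id := by
    ext a
    simp [mem_inf]
  have hsub : Sig.filter (fun Y => ∀ E ∈ t, Y ⊆ E) =
      (t.inf id).powerset.filter (fun Y : Finset α => G.IsClosedIn Set.univ ↑Y) := by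
    ext Y
    simp only [mem_filter, mem_powerset, isClosedIn_univ_iff,
      show Y ⊆ t.inf id ↔ ∀ E ∈ t, Y ⊆ E from Finset.le_inf_iff]
    obtain ⟨E₀, hE₀⟩ := ht
    exact ⟨fun ⟨hY, hYt⟩ => ⟨hYt, hcl Y hY⟩,
      fun ⟨hYt, hYc⟩ => ⟨hdc E₀ (htSig hE₀) Y hYc (hYt E₀ hE₀), hYt⟩⟩
  rw [hsub, G.sum_alphaIn_closed_subsets (G.isClosedIn_univ_iff.mpr hclosed), hinf, sum_const,
    nsmul_one]
  ring

lemma flatSum_image_coe_eq_card_sup_sub_sum_alphaIn (hcl : ∀ E ∈ Sig, G.IsClosed ↑E)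
    (hdc : ∀ E ∈ Sig, ∀ Y : Finset α, G.IsClosed ↑Y → Y ⊆ E → Y ∈ Sig) :
    G.flatSum (Sig.image ((↑) : Finset α → Set α)) =
      #(Sig.sup id) - ∑ Y ∈ Sig, G.alphaIn Set.univ Y := by
  have hunion : univ.filter (fun a => ∃ E ∈ Sig, a ∈ E) = Sig.sup id := by
    ext a
    simp
  have hdown : Sig.filter (fun Y => ∃ E ∈ Sig, Y ⊆ E) = Sig :=
    filter_true_of_mem fun Y hY => ⟨Y, hY, subset_rfl⟩
  calc G.flatSum (Sig.image ((↑) : Finset α → Set α))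
      = ∑ t ∈ Sig.powerset.filter (· ≠ ∅), (-1) ^ (#t + 1) *
          (∑ _ ∈ univ.filter (fun a => ∀ E ∈ t, a ∈ E), 1 -
            ∑ Y ∈ Sig.filter (fun Y => ∀ E ∈ t, Y ⊆ E), G.alphaIn Set.univ Y) := by
        rw [flatSum_image_coe]
        refine sum_congr rfl fun t ht => ?_
        rw [mem_filter, mem_powerset, ← nonempty_iff_ne_empty] at ht
        rw [G.dim_inf_eq_sum_sub_sum_alphaIn hcl hdc ht.1 ht.2]
    _ = ∑ _ ∈ univ.filter (fun a => ∃ E ∈ Sig, a ∈ E), 1 -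
          ∑ Y ∈ Sig.filter (fun Y => ∃ E ∈ Sig, Y ⊆ E), G.alphaIn Set.univ Y := by
        simp only [inclusion_exclusion_sum_filter_exists, mul_sub, sum_sub_distrib]
    _ = #(Sig.sup id) - ∑ Y ∈ Sig, G.alphaIn Set.univ Y := by
        rw [hunion, hdown, sum_const, nsmul_one]

lemma sum_alphaIn_add_sum_alphaIn_closed_not_mem (hcl : ∀ E ∈ Sig, G.IsClosed ↑E) :
    ∑ Y ∈ Sig, G.alphaIn Set.univ Y +
      ∑ X ∈ univ.filter (fun X : Finset α => G.IsClosed ↑X ∧ X ∉ Sig), G.alphaIn Set.univ X =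
        #(univ : Finset α) - G.dim univ := by
  have huniv : G.IsClosedIn Set.univ ↑(univ : Finset α) :=
    G.isClosedIn_univ_iff.mpr (coe_univ (α := α) ▸ G.isClosed_univ)
  rw [← G.sum_alphaIn_closed_subsets huniv, powerset_univ, ← sum_filter_add_sum_filter_not
    (univ.filter fun Y : Finset α => G.IsClosedIn Set.univ ↑Y) (· ∈ Sig), filter_filter,
    filter_filter]
  congr 1
  · refine sum_congr ?_ fun _ _ => rfl
    ext Y
    simp only [mem_filter, mem_univ, true_and, isClosedIn_univ_iff]
    exact ⟨fun hY => ⟨hcl Y hY, hY⟩, And.right⟩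
  · simp only [isClosedIn_univ_iff]

end Pregeometry

/-- for a finite pregeometry `G` and a downward-closed collection
`Σ` of closed subsets, `Δ_G(Σ) − d(G) = Σ_{X closed, X ∉ Σ} α_G(X) − |G ∖ ⋃Σ|`. -/
theorem flatSum_sub_dim_eq_alpha_sum {α : Type*} [DecidableEq α] [Fintype α]
    (G : Pregeometry α) (Sig : Finset (Finset α))
    (hcl : ∀ E ∈ Sig, G.IsClosed ↑E)
    (hdc : ∀ E ∈ Sig, ∀ Y : Finset α, G.IsClosed ↑Y → Y ⊆ E → Y ∈ Sig) :
    G.flatSum (Sig.image (fun E => (↑E : Set α))) - (G.dim Finset.univ : ℤ) =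
      (∑ X ∈ Finset.univ.filter (fun X : Finset α => G.IsClosed ↑X ∧ X ∉ Sig),
        G.alphaIn Set.univ X) - ((Finset.univ \ Sig.sup id).card : ℤ) := by
  -- `fun E => (↑E : Set α)` is elaborated before `Sig`, which is therefore first coerced to
  -- `Finset (Set α)` through the `Finset` monad
  have hcoe : Sig.image (fun E => (↑E : Set α)) = Sig.image ((↑) : Finset α → Set α) := by
    simp only [pure_def, bind_def, sup_singleton_apply, image_id']
    rfl
  rw [hcoe, G.flatSum_image_coe_eq_card_sup_sub_sum_alphaIn hcl hdc,
    cast_card_sdiff (subset_univ _)]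
  linarith [G.sum_alphaIn_add_sum_alphaIn_closed_not_mem hcl]
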